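/- Let f : ℕ → ℝ≥0 with all moments finite, let n ∈ ℕ, λ > 0 and a ≥ 1, and let α1, β1 ≥ 0. Then ∑_{k=1}^n ∑_{l=1}^{k-1} C(k,l) · m_{α1+l}⟨f⟩ · m_{α1+β1+k−l}⟨f⟩ · λ^{ak}/Γ(ak+1) ≤ 2√a · ℰ^n_{a,α1}(λ)⟨f⟩ · ℰ^n_{a,α1+β1}(λ)⟨f⟩. -/

import Mathlib

/-!
Comparing increments of the convex function `log ∘ Γ` twice gives
`Γ(a l + 1) Γ(a m + 1) (l + m)! ≤ l! m! Γ(a (l + m) + 1)` for `a ≥ 1`, i.e.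
`C(l + m, l) Γ(a l + 1) Γ(a m + 1) ≤ Γ(a (l + m) + 1)`, so each term of the double sum is at
most the product of the `l`-th term of `ℰ^n_{a,α1}` and the `m`-th term of `ℰ^n_{a,α1+β1}`,
where `k = l + m`. Reindexing by `(l, m)` shows the double sum is part of the expanded product of
the two truncated sums, and `1 ≤ 2√a`.
-/

/-- The `k`-th discrete moment `m_k⟨f⟩ = ∑_{i≥1} f(i) (i h)^k` with mesh size `h`. -/
noncomputable def mom (h k : ℝ) (f : ℕ → ℝ) : ℝ :=
  ∑' i : ℕ, f (i + 1) * (((i : ℝ) + 1) * h) ^ k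

/-- Shifted truncated Mittag–Leffler moment
`ℰ^n_{a,ρ}(λ)⟨f⟩ = ∑_{k=1}^n m_{k+ρ}⟨f⟩ λ^{ak}/Γ(ak+1)` for finite `n`. -/
noncomputable def emlN (h : ℝ) (n : ℕ) (a ρ lam : ℝ) (f : ℕ → ℝ) : ℝ :=
  ∑ k ∈ Finset.Icc 1 n, mom h ((k : ℝ) + ρ) f * lam ^ (a * k) / Real.Gamma (a * k + 1)

open Finset Real

theorem ConvexOn.map_add_add_le {s : Set ℝ} {φ : ℝ → ℝ} (hφ : ConvexOn ℝ s φ) {x y c : ℝ}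
    (hx : x ∈ s) (hyc : y + c ∈ s) (hxy : x ≤ y) (hc : 0 ≤ c) :
    φ (x + c) + φ y ≤ φ x + φ (y + c) := by
  rcases hc.eq_or_lt with rfl | hc
  · simp
  have hmem : ∀ z, x ≤ z → z ≤ y + c → z ∈ s := fun z h₁ h₂ =>
    hφ.1.ordConnected.out hx hyc ⟨h₁, h₂⟩
  have h₁ := hφ.secant_mono hx (hmem (x + c) (by linarith) (by linarith)) hyc
    (by linarith) (by linarith) (by linarith)
  have h₂ := hφ.secant_mono hyc hx (hmem y hxy (by linarith)) (by linarith) (by linarith) hxy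
  rw [← neg_div_neg_eq, neg_sub, neg_sub, show y - (y + c) = -c by ring, div_neg, ← neg_div,
    neg_sub] at h₂
  rw [add_sub_cancel_left] at h₁
  have := (div_le_div_iff_of_pos_right hc).1 (h₁.trans h₂)
  linarith

namespace Real

theorem Gamma_add_mul_Gamma_le {x y c : ℝ} (hx : 0 < x) (hxy : x ≤ y) (hc : 0 ≤ c) :
    Gamma (x + c) * Gamma y ≤ Gamma x * Gamma (y + c) := by
  have h := convexOn_log_Gamma.map_add_add_le hx
    (show y + c ∈ Set.Ioi 0 from Set.mem_Ioi.2 (by linarith)) hxy hc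
  simp only [Function.comp_apply] at h
  have hy : 0 < y := hx.trans_le hxy
  rw [← log_mul (by positivity) (by positivity), ← log_mul (by positivity) (by positivity)] at h
  exact (log_le_log_iff (by positivity) (by positivity)).1 h

theorem Gamma_mul_Gamma_mul_Gamma_le {a x y : ℝ} (ha : 1 ≤ a) (hx : 0 ≤ x) (hy : 0 ≤ y) :
    Gamma (a * x + 1) * Gamma (a * y + 1) * Gamma (x + y + 1)
      ≤ Gamma (x + 1) * Gamma (y + 1) * Gamma (a * (x + y) + 1) := by
  have hax : 0 ≤ (a - 1) * x := mul_nonneg (by linarith) hx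
  have hay : 0 ≤ (a - 1) * y := mul_nonneg (by linarith) hy
  have h₁ :
      Gamma (a * x + 1) * Gamma (a * y + x + 1) ≤ Gamma (x + 1) * Gamma (a * (x + y) + 1) := by
    have := Gamma_add_mul_Gamma_le (x := x + 1) (y := a * y + x + 1) (by linarith) (by nlinarith)
      hax
    rwa [show x + 1 + (a - 1) * x = a * x + 1 by ring,
      show a * y + x + 1 + (a - 1) * x = a * (x + y) + 1 by ring] at this
  have h₂ : Gamma (a * y + 1) * Gamma (x + y + 1) ≤ Gamma (y + 1) * Gamma (a * y + x + 1) := by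
    have := Gamma_add_mul_Gamma_le (x := y + 1) (y := x + y + 1) (by linarith) (by linarith) hay
    rwa [show y + 1 + (a - 1) * y = a * y + 1 by ring,
      show x + y + 1 + (a - 1) * y = a * y + x + 1 by ring] at this
  have hpos : ∀ z, 0 ≤ z → 0 < Gamma (a * z + 1) := fun z hz =>
    Gamma_pos_of_pos (by nlinarith)
  refine le_of_mul_le_mul_right ?_ (Gamma_pos_of_pos (by nlinarith : 0 < a * y + x + 1))
  calc _ = (Gamma (a * x + 1) * Gamma (a * y + x + 1))
          * (Gamma (a * y + 1) * Gamma (x + y + 1)) := by ring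
    _ ≤ (Gamma (x + 1) * Gamma (a * (x + y) + 1)) * (Gamma (y + 1) * Gamma (a * y + x + 1)) :=
        mul_le_mul h₁ h₂ (mul_pos (hpos y hy) (Gamma_pos_of_pos (by linarith))).le
          (mul_pos (Gamma_pos_of_pos (by linarith)) (hpos _ (add_nonneg hx hy))).le
    _ = _ := by ring

theorem add_choose_mul_Gamma_mul_Gamma_le {a : ℝ} (ha : 1 ≤ a) (l m : ℕ) :
    ((l + m).choose l : ℝ) * Gamma (a * l + 1) * Gamma (a * m + 1)
      ≤ Gamma (a * (l + m) + 1) := by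
  have key := Gamma_mul_Gamma_mul_Gamma_le ha l.cast_nonneg m.cast_nonneg
  rw [Gamma_nat_eq_factorial, Gamma_nat_eq_factorial, ← Nat.cast_add, Gamma_nat_eq_factorial,
    Nat.cast_add] at key
  rw [Nat.cast_add_choose, div_mul_eq_mul_div, div_mul_eq_mul_div,
    div_le_iff₀ (by positivity)]
  linarith

end Real

theorem sum_Icc_sum_Ico_mul_le {R : Type*} [CommSemiring R] [PartialOrder R] [IsOrderedRing R]
    (n : ℕ) {u v : ℕ → R} (hu : ∀ i, 0 ≤ u i) (hv : ∀ i, 0 ≤ v i) :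
    ∑ k ∈ Icc 1 n, ∑ l ∈ Ico 1 k, u l * v (k - l)
      ≤ (∑ l ∈ Icc 1 n, u l) * ∑ j ∈ Icc 1 n, v j := by
  set S := (Icc 1 n ×ˢ Icc 1 n).filter fun p : ℕ × ℕ => p.2 < p.1
  have hS : ∀ p, p ∈ S ↔ p.1 ∈ Icc 1 n ∧ p.2 ∈ Ico 1 p.1 := fun p => by
    simp only [S, mem_filter, mem_product, mem_Icc, mem_Ico]
    omega
  rw [← sum_finset_product' S _ _ hS, sum_mul_sum, ← sum_product']
  have hinj : Set.InjOn (fun p : ℕ × ℕ => (p.2, p.1 - p.2)) S := by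
    rintro ⟨k, l⟩ hkl ⟨k', l'⟩ hkl' h
    simp only [S, coe_filter, mem_product, mem_Icc, Set.mem_ofPred_eq, Prod.mk.injEq]
      at hkl hkl' h ⊢
    omega
  calc ∑ p ∈ S, u p.2 * v (p.1 - p.2)
        = ∑ q ∈ S.image fun p => (p.2, p.1 - p.2), u q.1 * v q.2 :=
          (sum_image (f := fun q => u q.1 * v q.2) hinj).symm
    _ ≤ _ := by
      refine sum_le_sum_of_subset_of_nonneg ?_ fun q _ _ => mul_nonneg (hu _) (hv _)
      intro q hq
      obtain ⟨⟨k, l⟩, hkl, rfl⟩ := mem_image.1 hq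
      simp only [S, mem_filter, mem_product, mem_Icc] at hkl ⊢
      omega

theorem mom_nonneg {h : ℝ} (hh : 0 ≤ h) {f : ℕ → ℝ} (hf : ∀ i, 0 ≤ f i) (k : ℝ) :
    0 ≤ mom h k f :=
  tsum_nonneg fun _ => mul_nonneg (hf _) (rpow_nonneg (by positivity) _)

theorem add_choose_mul_div_Gamma_le {a lam M N : ℝ} (ha : 1 ≤ a) (hlam : 0 < lam)
    (hM : 0 ≤ M) (hN : 0 ≤ N) (l m : ℕ) :
    ((l + m).choose l : ℝ) * M * N * lam ^ (a * (l + m)) / Gamma (a * (l + m) + 1)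
      ≤ M * lam ^ (a * l) / Gamma (a * l + 1) * (N * lam ^ (a * m) / Gamma (a * m + 1)) := by
  have hΓ := add_choose_mul_Gamma_mul_Gamma_le ha l m
  have hpow : lam ^ (a * (l + m)) = lam ^ (a * l) * lam ^ (a * m) := by
    rw [mul_add, rpow_add hlam]
  rw [hpow, div_mul_div_comm, div_le_div_iff₀ (by positivity) (by positivity)]
  calc _ = ((l + m).choose l * Gamma (a * l + 1) * Gamma (a * m + 1))
          * (M * lam ^ (a * l) * (N * lam ^ (a * m))) := by ring
    _ ≤ Gamma (a * (l + m) + 1) * (M * lam ^ (a * l) * (N * lam ^ (a * m))) :=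
        mul_le_mul_of_nonneg_right hΓ (by positivity)
    _ = _ := by ring

theorem stmt_9_general (h : ℝ) (n : ℕ) (a lam α1 β1 : ℝ) (f : ℕ → ℝ)
    (hh : 0 < h) (hf : ∀ i, 0 ≤ f i)
    (ha : 1 ≤ a) (hlam : 0 < lam) :
    ∑ k ∈ Finset.Icc 1 n, ∑ l ∈ Finset.Ico 1 k,
        (k.choose l : ℝ) * mom h (α1 + l) f * mom h (α1 + β1 + ((k : ℝ) - l)) f *
          lam ^ (a * k) / Real.Gamma (a * k + 1)
      ≤ 2 * Real.sqrt a * emlN h n a α1 lam f * emlN h n a (α1 + β1) lam f := by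
  set u : ℝ → ℕ → ℝ := fun ρ l => mom h (l + ρ) f * lam ^ (a * l) / Gamma (a * l + 1)
  have hu : ∀ ρ l, 0 ≤ u ρ l := fun ρ l => by
    have := mom_nonneg hh.le hf (l + ρ)
    positivity
  calc _ ≤ ∑ k ∈ Icc 1 n, ∑ l ∈ Ico 1 k, u α1 l * u (α1 + β1) (k - l) := by
        refine sum_le_sum fun k _ => sum_le_sum fun l hl => ?_
        obtain ⟨m, rfl⟩ := Nat.exists_eq_add_of_le (mem_Ico.1 hl).2.le
        simp only [u, Nat.add_sub_cancel_left, Nat.cast_add, add_sub_cancel_left]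
        rw [add_comm α1, add_comm (α1 + β1)]
        exact add_choose_mul_div_Gamma_le ha hlam (mom_nonneg hh.le hf _)
          (mom_nonneg hh.le hf _) l m
    _ ≤ emlN h n a α1 lam f * emlN h n a (α1 + β1) lam f :=
        sum_Icc_sum_Ico_mul_le n (hu α1) (hu (α1 + β1))
    _ ≤ _ := by
      rw [mul_assoc]
      refine le_mul_of_one_le_left ?_ (by linarith [one_le_sqrt.2 ha])
      exact mul_nonneg (sum_nonneg fun l _ => hu α1 l) (sum_nonneg fun l _ => hu (α1 + β1) l)

/-- Combinatorial Mittag–Leffler estimate: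
`∑_{k=1}^n ∑_{l=1}^{k-1} C(k,l) m_{α1+l}⟨f⟩ m_{α1+β1+k-l}⟨f⟩ λ^{ak}/Γ(ak+1)
  ≤ 2√a ℰ^n_{a,α1}(λ)⟨f⟩ ℰ^n_{a,α1+β1}(λ)⟨f⟩`. -/
theorem stmt_9 (h : ℝ) (n : ℕ) (a lam α1 β1 : ℝ) (f : ℕ → ℝ)
    (hh : 0 < h) (hf : ∀ i, 0 ≤ f i)
    (hmom : ∀ r : ℝ, Summable (fun i : ℕ => f (i + 1) * (((i : ℝ) + 1) * h) ^ r))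
    (ha : 1 ≤ a) (hlam : 0 < lam) (hα1 : 0 ≤ α1) (hβ1 : 0 ≤ β1) :
    ∑ k ∈ Finset.Icc 1 n, ∑ l ∈ Finset.Ico 1 k,
        (k.choose l : ℝ) * mom h (α1 + l) f * mom h (α1 + β1 + ((k : ℝ) - l)) f *
          lam ^ (a * k) / Real.Gamma (a * k + 1)
      ≤ 2 * Real.sqrt a * emlN h n a α1 lam f * emlN h n a (α1 + β1) lam f :=
  stmt_9_general h n a lam α1 β1 f hh hf ha hlam
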